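/- arXiv:1609.00467 — 4 statements merged into one kernel-verified Lean document; each statement's English description precedes it below -/
import Mathlib

section
/- If (u*,v*,z*) is a saddle point of the Lagrangian L, then (z*, d−Cv*) belongs to the extended solution set S_e, i.e. −(d−Cv*) ∈ ∂h1(z*) and d−Cv* ∈ ∂h2(z*). -/
/-!
Minimality of `L(·, v*, z*)` at `u*` says `-M* z* ∈ ∂f(u*)`, symmetrically `-C* z* ∈ ∂g(v*)`, and
maximality of the affine function `L(u*, v*, ·)` at `z*` forces `M u* + C v* = d`.
Now `h₁` is the supremum over `u` of the affine functions `z ↦ -⟪M u, z⟫ - f u`, and by the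
Fenchel–Young equality the one indexed by `u*` touches `h₁` at `z*`; its slope
`-M u* = -(d - C v*)` is therefore a subgradient. The same argument with `g, C` and the extra
linear term `⟪d, z⟫` gives `d - C v* ∈ ∂h₂(z*)`.
-/

open scoped RealInnerProductSpace

noncomputable section

/-- `w` is a subgradient of the extended-real-valued function `φ` at `x`. -/
def HasSubgrad {E : Type*} [NormedAddCommGroup E] [InnerProductSpace ℝ E]
    (φ : E → EReal) (w x : E) : Prop :=
  ∀ x' : E, φ x + ((⟪w, x' - x⟫ : ℝ) : EReal) ≤ φ x'

/-- `w` is an `ε`-subgradient of `φ` at `x`. -/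
def HasESubgrad {E : Type*} [NormedAddCommGroup E] [InnerProductSpace ℝ E]
    (φ : E → EReal) (ε : ℝ) (w x : E) : Prop :=
  ∀ x' : E, φ x + ((⟪w, x' - x⟫ : ℝ) : EReal) - (ε : EReal) ≤ φ x'

/-- Convexity for an extended-real-valued function. -/
def ConvexE {E : Type*} [NormedAddCommGroup E] [InnerProductSpace ℝ E]
    (φ : E → EReal) : Prop :=
  ∀ x y : E, ∀ a b : ℝ, 0 ≤ a → 0 ≤ b → a + b = 1 →
    φ (a • x + b • y) ≤ (a : EReal) * φ x + (b : EReal) * φ y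

/-- Proper closed convex function with values in `(-∞, ∞]`. -/
def IsPCC {E : Type*} [NormedAddCommGroup E] [InnerProductSpace ℝ E]
    (φ : E → EReal) : Prop :=
  (∀ x, φ x ≠ ⊥) ∧ (∃ x, φ x ≠ ⊤) ∧ LowerSemicontinuous φ ∧ ConvexE φ

/-- Fenchel conjugate. -/
def fconj {E : Type*} [NormedAddCommGroup E] [InnerProductSpace ℝ E]
    (φ : E → EReal) (w : E) : EReal :=
  ⨆ x : E, ((⟪w, x⟫ : ℝ) : EReal) - φ x

/-- Lagrangian of `min { f u + g v : M u + C v = d }`. -/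
def Lag {E₁ E₂ F : Type*} [NormedAddCommGroup E₁] [InnerProductSpace ℝ E₁]
    [NormedAddCommGroup E₂] [InnerProductSpace ℝ E₂]
    [NormedAddCommGroup F] [InnerProductSpace ℝ F]
    (f : E₁ → EReal) (g : E₂ → EReal) (M : E₁ →ₗ[ℝ] F) (C : E₂ →ₗ[ℝ] F) (d : F)
    (u : E₁) (v : E₂) (z : F) : EReal :=
  f u + g v + ((⟪M u + C v - d, z⟫ : ℝ) : EReal)

/-- Saddle point of the Lagrangian. -/
def IsSaddle {E₁ E₂ F : Type*} [NormedAddCommGroup E₁] [InnerProductSpace ℝ E₁]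
    [NormedAddCommGroup E₂] [InnerProductSpace ℝ E₂]
    [NormedAddCommGroup F] [InnerProductSpace ℝ F]
    (f : E₁ → EReal) (g : E₂ → EReal) (M : E₁ →ₗ[ℝ] F) (C : E₂ →ₗ[ℝ] F) (d : F)
    (us : E₁) (vs : E₂) (zs : F) : Prop :=
  Lag f g M C d us vs zs ≠ ⊤ ∧ Lag f g M C d us vs zs ≠ ⊥ ∧
  (∀ u v, Lag f g M C d us vs zs ≤ Lag f g M C d u v zs) ∧
  (∀ ζ, Lag f g M C d us vs ζ ≤ Lag f g M C d us vs zs)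

/-- `h₁(z) = f*(-M* z)`. -/
def hOne {E₁ F : Type*} [NormedAddCommGroup E₁] [InnerProductSpace ℝ E₁]
    [FiniteDimensional ℝ E₁] [NormedAddCommGroup F] [InnerProductSpace ℝ F]
    [FiniteDimensional ℝ F] (f : E₁ → EReal) (M : E₁ →ₗ[ℝ] F) (z : F) : EReal :=
  fconj f (-(LinearMap.adjoint M z))

/-- `h₂(z) = g*(-C* z) + ⟪d, z⟫`. -/
def hTwo {E₂ F : Type*} [NormedAddCommGroup E₂] [InnerProductSpace ℝ E₂]
    [FiniteDimensional ℝ E₂] [NormedAddCommGroup F] [InnerProductSpace ℝ F]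
    [FiniteDimensional ℝ F] (g : E₂ → EReal) (C : E₂ →ₗ[ℝ] F) (d : F) (z : F) : EReal :=
  fconj g (-(LinearMap.adjoint C z)) + ((⟪d, z⟫ : ℝ) : EReal)

/-- The extended solution set `S_e(∂h₁, ∂h₂)`. -/
def extSolSet {E₁ E₂ F : Type*} [NormedAddCommGroup E₁] [InnerProductSpace ℝ E₁]
    [FiniteDimensional ℝ E₁] [NormedAddCommGroup E₂] [InnerProductSpace ℝ E₂]
    [FiniteDimensional ℝ E₂] [NormedAddCommGroup F] [InnerProductSpace ℝ F]
    [FiniteDimensional ℝ F]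
    (f : E₁ → EReal) (g : E₂ → EReal) (M : E₁ →ₗ[ℝ] F) (C : E₂ →ₗ[ℝ] F) (d : F) :
    Set (F × F) :=
  {p | HasSubgrad (hOne f M) (-p.2) p.1 ∧ HasSubgrad (hTwo g C d) p.2 p.1}


section Subgradient

variable {E : Type*} [NormedAddCommGroup E] [InnerProductSpace ℝ E]

theorem inner_sub_le_fconj (φ : E → EReal) (w x : E) :
    ((⟪w, x⟫ : ℝ) : EReal) - φ x ≤ fconj φ w :=
  le_iSup (fun x => ((⟪w, x⟫ : ℝ) : EReal) - φ x) x

theorem HasSubgrad.fconj_eq {φ : E → EReal} {w x : E} (h : HasSubgrad φ w x) :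
    fconj φ w = ((⟪w, x⟫ : ℝ) : EReal) - φ x := by
  refine le_antisymm (iSup_le fun x' => ?_) (inner_sub_le_fconj φ w x)
  have hx' := h x'
  rw [inner_sub_right] at hx'
  generalize φ x = y at hx' ⊢
  induction y with
  | bot => simp
  | top =>
    rw [EReal.top_add_coe, top_le_iff] at hx'
    simp [hx']
  | coe a =>
    calc ((⟪w, x'⟫ : ℝ) : EReal) - φ x'
        ≤ ((⟪w, x'⟫ : ℝ) : EReal) - ((a + (⟪w, x'⟫ - ⟪w, x⟫) : ℝ) : EReal) :=
          EReal.sub_le_sub le_rfl hx'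
      _ = ((⟪w, x⟫ : ℝ) : EReal) - (a : EReal) := by norm_cast; ring_nf

theorem HasSubgrad.add_inner {φ : E → EReal} {w x : E} (h : HasSubgrad φ w x) (d : E) :
    HasSubgrad (fun z => φ z + ((⟪d, z⟫ : ℝ) : EReal)) (w + d) x := by
  intro x'
  calc φ x + ((⟪d, x⟫ : ℝ) : EReal) + ((⟪w + d, x' - x⟫ : ℝ) : EReal)
      = φ x + ((⟪w, x' - x⟫ : ℝ) : EReal) + ((⟪d, x'⟫ : ℝ) : EReal) := by
        rw [add_assoc, add_assoc, ← EReal.coe_add, ← EReal.coe_add, inner_add_left,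
          inner_sub_right d]
        ring_nf
    _ ≤ φ x' + ((⟪d, x'⟫ : ℝ) : EReal) := by gcongr; exact h x'

theorem hasSubgrad_neg_of_forall_add_inner_le {φ : E → EReal} {w x : E}
    (h : ∀ x', φ x + ((⟪w, x⟫ : ℝ) : EReal) ≤ φ x' + ((⟪w, x'⟫ : ℝ) : EReal)) :
    HasSubgrad φ (-w) x := by
  intro x'
  rw [← (EReal.addLECancellable_coe ⟪w, x'⟫).add_le_add_iff_right]
  calc φ x + ((⟪-w, x' - x⟫ : ℝ) : EReal) + ((⟪w, x'⟫ : ℝ) : EReal)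
      = φ x + ((⟪w, x⟫ : ℝ) : EReal) := by
        rw [add_assoc, ← EReal.coe_add, inner_neg_left, inner_sub_right]
        ring_nf
    _ ≤ φ x' + ((⟪w, x'⟫ : ℝ) : EReal) := h x'

theorem eq_zero_of_forall_inner_le {r z : E} (h : ∀ ζ, ⟪r, ζ⟫ ≤ ⟪r, z⟫) : r = 0 := by
  have h' := h (z + r)
  rw [inner_add_right] at h'
  exact real_inner_self_nonpos.1 (by linarith)

end Subgradient

section Conjugate

variable {E₁ E₂ F : Type*} [NormedAddCommGroup E₁] [InnerProductSpace ℝ E₁]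
  [FiniteDimensional ℝ E₁] [NormedAddCommGroup E₂] [InnerProductSpace ℝ E₂]
  [FiniteDimensional ℝ E₂] [NormedAddCommGroup F] [InnerProductSpace ℝ F]
  [FiniteDimensional ℝ F]

theorem hasSubgrad_hOne {f : E₁ → EReal} {M : E₁ →ₗ[ℝ] F} {u : E₁} {z : F}
    (h : HasSubgrad f (-(LinearMap.adjoint M z)) u) : HasSubgrad (hOne f M) (-(M u)) z := by
  intro z'
  calc hOne f M z + ((⟪-(M u), z' - z⟫ : ℝ) : EReal)
      = ((⟪-(LinearMap.adjoint M z), u⟫ + ⟪-(M u), z' - z⟫ : ℝ) : EReal) - f u := by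
        rw [hOne, h.fconj_eq, sub_eq_add_neg, sub_eq_add_neg, add_right_comm, EReal.coe_add]
        rfl
    _ = ((⟪-(LinearMap.adjoint M z'), u⟫ : ℝ) : EReal) - f u := by
        simp only [inner_neg_left, LinearMap.adjoint_inner_left, inner_sub_right,
          real_inner_comm (M u)]
        ring_nf
    _ ≤ hOne f M z' := inner_sub_le_fconj f _ u

theorem hasSubgrad_hTwo {g : E₂ → EReal} {C : E₂ →ₗ[ℝ] F} {d : F} {v : E₂} {z : F}
    (h : HasSubgrad g (-(LinearMap.adjoint C z)) v) : HasSubgrad (hTwo g C d) (d - C v) z := by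
  rw [← neg_add_eq_sub]
  exact (hasSubgrad_hOne h).add_inner d

end Conjugate

section Saddle

variable {E₁ E₂ F : Type*} [NormedAddCommGroup E₁] [InnerProductSpace ℝ E₁]
  [NormedAddCommGroup E₂] [InnerProductSpace ℝ E₂] [NormedAddCommGroup F] [InnerProductSpace ℝ F]
  {f : E₁ → EReal} {g : E₂ → EReal} {M : E₁ →ₗ[ℝ] F} {C : E₂ →ₗ[ℝ] F} {d : F}
  {us : E₁} {vs : E₂} {zs : F}

theorem Lag_swap (u : E₁) (v : E₂) (z : F) : Lag f g M C d u v z = Lag g f C M d v u z := by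
  rw [Lag, Lag, add_comm (f u), add_comm (M u)]

theorem IsSaddle.swap (h : IsSaddle f g M C d us vs zs) : IsSaddle g f C M d vs us zs := by
  obtain ⟨htop, hbot, hmin, hmax⟩ := h
  simp only [Lag_swap (f := f) (g := g)] at htop hbot hmin hmax
  exact ⟨htop, hbot, fun v u => hmin u v, hmax⟩

theorem IsSaddle.exists_eq_coe (h : IsSaddle f g M C d us vs zs) :
    ∃ a b : ℝ, f us = a ∧ g vs = b := by
  obtain ⟨htop, hbot, -, -⟩ := h
  rw [Lag] at htop hbot
  simp only [ne_eq, EReal.add_eq_bot_iff, EReal.coe_ne_bot, not_or] at hbot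
  rw [EReal.add_ne_top_iff_ne_top₂ (by simp [hbot]) (EReal.coe_ne_bot _),
    EReal.add_ne_top_iff_ne_top₂ hbot.1.1 hbot.1.2] at htop
  exact ⟨_, _, (EReal.coe_toReal htop.1.1 hbot.1.1).symm,
    (EReal.coe_toReal htop.1.2 hbot.1.2).symm⟩

theorem IsSaddle.feasible (h : IsSaddle f g M C d us vs zs) : M us + C vs = d := by
  obtain ⟨a, b, ha, hb⟩ := h.exists_eq_coe
  refine sub_eq_zero.1 (eq_zero_of_forall_inner_le (z := zs) fun ζ => ?_)
  have hζ := h.2.2.2 ζ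
  rw [Lag, Lag, ha, hb] at hζ
  norm_cast at hζ
  linarith

variable [FiniteDimensional ℝ E₁] [FiniteDimensional ℝ F]

theorem Lag_eq_add_inner_adjoint (u : E₁) (v : E₂) (z : F) :
    Lag f g M C d u v z = f u + ((⟪LinearMap.adjoint M z, u⟫ : ℝ) : EReal)
      + (g v + ((⟪C v - d, z⟫ : ℝ) : EReal)) := by
  rw [Lag, LinearMap.adjoint_inner_left, add_sub_assoc, inner_add_left, real_inner_comm z,
    EReal.coe_add]
  ac_rfl

theorem IsSaddle.hasSubgrad_left (h : IsSaddle f g M C d us vs zs) :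
    HasSubgrad f (-(LinearMap.adjoint M zs)) us := by
  obtain ⟨a, b, -, hb⟩ := h.exists_eq_coe
  refine hasSubgrad_neg_of_forall_add_inner_le fun u => ?_
  have hu := h.2.2.1 u vs
  rw [Lag_eq_add_inner_adjoint, Lag_eq_add_inner_adjoint, hb, ← EReal.coe_add] at hu
  exact (EReal.addLECancellable_coe _).add_le_add_iff_right.1 hu

end Saddle

theorem saddle_mem_extSolSet_general (m1 m2 n : ℕ)
    (f : EuclideanSpace ℝ (Fin m1) → EReal) (g : EuclideanSpace ℝ (Fin m2) → EReal)
    (M : EuclideanSpace ℝ (Fin m1) →ₗ[ℝ] EuclideanSpace ℝ (Fin n))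
    (C : EuclideanSpace ℝ (Fin m2) →ₗ[ℝ] EuclideanSpace ℝ (Fin n))
    (d : EuclideanSpace ℝ (Fin n))
    (ustar : EuclideanSpace ℝ (Fin m1)) (vstar : EuclideanSpace ℝ (Fin m2))
    (zstar : EuclideanSpace ℝ (Fin n))
    (hsad : IsSaddle f g M C d ustar vstar zstar) :
    (zstar, d - C vstar) ∈ extSolSet f g M C d := by
  have hMu : M ustar = d - C vstar := eq_sub_of_add_eq hsad.feasible
  refine ⟨?_, hasSubgrad_hTwo hsad.swap.hasSubgrad_left⟩
  rw [← hMu]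
  exact hasSubgrad_hOne hsad.hasSubgrad_left

/-- if `(u*, v*, z*)` is a saddle point of the Lagrangian `L`, then
`(z*, d - Cv*)` belongs to the extended solution set `S_e`, i.e.
`-(d - Cv*) ∈ ∂h₁(z*)` and `d - Cv* ∈ ∂h₂(z*)`. -/
theorem saddle_mem_extSolSet (m1 m2 n : ℕ)
    (f : EuclideanSpace ℝ (Fin m1) → EReal) (g : EuclideanSpace ℝ (Fin m2) → EReal)
    (hf : IsPCC f) (hg : IsPCC g)
    (M : EuclideanSpace ℝ (Fin m1) →ₗ[ℝ] EuclideanSpace ℝ (Fin n))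
    (C : EuclideanSpace ℝ (Fin m2) →ₗ[ℝ] EuclideanSpace ℝ (Fin n))
    (d : EuclideanSpace ℝ (Fin n))
    (ustar : EuclideanSpace ℝ (Fin m1)) (vstar : EuclideanSpace ℝ (Fin m2))
    (zstar : EuclideanSpace ℝ (Fin n))
    (hsad : IsSaddle f g M C d ustar vstar zstar) :
    (zstar, d - C vstar) ∈ extSolSet f g M C d :=
  saddle_mem_extSolSet_general m1 m2 n f g M C d ustar vstar zstar hsad
end
end

section
/- Assume ri(dom f*) ∩ range M* ≠ ∅ and ri(dom g*) ∩ range C* ≠ ∅ (ri denoting relative interior). Then for every (z*,w*) in the extended solution set S_e there exist u* ∈ ℝ^{m1} and v* ∈ ℝ^{m2} such that w* = d−Cv*, w* = Mu*, and (u*,v*,z*) is a saddle point of the Lagrangian L. -/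
open scoped RealInnerProductSpace

noncomputable section

/-!
The conditions defining `S_e` say that `-w*` is a subgradient of `f* ∘ (-M*)` at `z*` and
`w* - d` one of `g* ∘ (-C*)`. Under the relative-interior qualifications, the chain rule for
subdifferentials turns these into `u* ∈ ∂f*(-M* z*)` with `M u* = w*` and `v* ∈ ∂g*(-C* z*)` with
`C v* = d - w*`; the chain rule itself comes from a proper separation, in `E × ℝ`, of the epigraph
from the strict subgraph of an affine minorant on a subspace. By Fenchel–Moreau (`φ ≤ φ**` for
proper closed convex `φ`), `u ∈ ∂φ*(y)` gives `y ∈ ∂φ(u)`, so `-M* z* ∈ ∂f(u*)`,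
`-C* z* ∈ ∂g(v*)` and `M u* + C v* = d`: these KKT conditions make `(u*, v*, z*)` a saddle point.
-/

section Separation

variable {V : Type*} [NormedAddCommGroup V] [NormedSpace ℝ V] [FiniteDimensional ℝ V]

theorem Convex.exists_dual_ne_zero_nonpos {K : Set V} (hK : Convex ℝ K) (hne : K.Nonempty)
    (h0 : (0 : V) ∉ K) : ∃ f : StrongDual ℝ V, f ≠ 0 ∧ ∀ k ∈ K, f k ≤ 0 := by
  by_cases hspan : affineSpan ℝ K = ⊤
  · obtain ⟨f, hf0, hf⟩ := geometric_hahn_banach_of_nonempty_interior_point hK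
      (fun h => h0 (interior_subset h)) (hK.interior_nonempty_iff_affineSpan_eq_top.2 hspan)
    exact ⟨f, hf0, by simpa using hf⟩
  -- otherwise `K` lies in a proper affine subspace, on which a nonzero functional is constant
  obtain ⟨k₀, hk₀⟩ := hne
  have hdir : (affineSpan ℝ K).direction < ⊤ := by
    rw [lt_top_iff_ne_top, Ne, AffineSubspace.direction_eq_top_iff_of_nonempty
      ⟨k₀, subset_affineSpan ℝ K hk₀⟩]
    exact hspan
  obtain ⟨g, hg0, hker⟩ := Submodule.exists_le_ker_of_lt_top _ hdir
  have hconst : ∀ k ∈ K, g k = g k₀ := fun k hk => by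
    have := hker (AffineSubspace.vsub_mem_direction (subset_affineSpan ℝ K hk)
      (subset_affineSpan ℝ K hk₀))
    rwa [LinearMap.mem_ker, vsub_eq_sub, map_sub, sub_eq_zero] at this
  have hf0 : LinearMap.toContinuousLinearMap g ≠ 0 :=
    (LinearEquiv.map_ne_zero_iff _).2 hg0
  rcases le_total (g k₀) 0 with h | h
  · exact ⟨_, hf0, fun k hk => by simpa [hconst k hk] using h⟩
  · exact ⟨_, neg_ne_zero.2 hf0, fun k hk => by simpa [hconst k hk] using h⟩

theorem Convex.exists_dual_nonpos_exists_neg {K : Set V} (hK : Convex ℝ K) (hne : K.Nonempty)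
    (h0 : (0 : V) ∉ K) : ∃ f : StrongDual ℝ V, (∀ k ∈ K, f k ≤ 0) ∧ ∃ k ∈ K, f k < 0 := by
  set W := Submodule.span ℝ K
  obtain ⟨k, hk⟩ := hne
  obtain ⟨g, hg0, hg⟩ := (hK.linear_preimage W.subtype).exists_dual_ne_zero_nonpos
    ⟨⟨k, Submodule.subset_span hk⟩, hk⟩ (by simpa using h0)
  -- `K` spans `W`, so the nonzero `g` cannot vanish on it
  obtain ⟨k', hk', hgk'⟩ : ∃ k' ∈ W.subtype ⁻¹' K, g k' ≠ 0 := by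
    by_contra! h
    exact hg0 (ContinuousLinearMap.coe_injective
      (LinearMap.ext_on Submodule.span_span_coe_preimage fun x hx => by simpa using h x hx))
  obtain ⟨f, hfg, -⟩ := exists_extension_norm_eq W g
  refine ⟨f, fun x hx => ?_, k', hk', ?_⟩
  · rw [show x = ((⟨x, Submodule.subset_span hx⟩ : W) : V) from rfl, hfg]
    exact hg _ hx
  · rw [hfg]
    exact (hg k' hk').lt_of_ne hgk'

theorem Convex.exists_dual_properly_separating {S T : Set V} (hS : Convex ℝ S)
    (hT : Convex ℝ T) (hSne : S.Nonempty) (hTne : T.Nonempty) (hST : Disjoint S T) :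
    ∃ f : StrongDual ℝ V, (∀ a ∈ S, ∀ b ∈ T, f a ≤ f b) ∧ ∃ a ∈ S, ∃ b ∈ T, f a < f b := by
  obtain ⟨f, hle, _, ⟨a, ha, b, hb, rfl⟩, hlt⟩ := (hS.sub hT).exists_dual_nonpos_exists_neg
    (hSne.sub hTne) fun h => Set.zero_mem_sub_iff.1 h hST
  refine ⟨f, fun a ha b hb => ?_, a, ha, b, hb, by simpa using hlt⟩
  simpa using hle (a - b) (Set.sub_mem_sub ha hb)

end Separation

def epi {α : Type*} (φ : α → EReal) : Set (α × ℝ) := {p | φ p.1 ≤ p.2}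

theorem LowerSemicontinuous.isClosed_epi {α : Type*} [TopologicalSpace α] {φ : α → EReal}
    (hφ : LowerSemicontinuous φ) : IsClosed (epi φ) :=
  hφ.isClosed_epigraph.preimage
    (continuous_fst.prodMk (continuous_coe_real_ereal.comp continuous_snd))

section Convex

variable {E : Type*} [NormedAddCommGroup E] [InnerProductSpace ℝ E]

theorem exists_inner_add_mul_eq [CompleteSpace E] (F : StrongDual ℝ (E × ℝ)) :
    ∃ (w : E) (γ : ℝ), ∀ p : E × ℝ, F p = ⟪w, p.1⟫ + γ * p.2 := by
  refine ⟨(InnerProductSpace.toDual ℝ E).symm (F.comp (ContinuousLinearMap.inl ℝ E ℝ)), F (0, 1),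
    fun p => ?_⟩
  have hp : p = (p.1, 0) + p.2 • ((0 : E), (1 : ℝ)) := by ext <;> simp
  rw [InnerProductSpace.toDual_symm_apply, hp, map_add, map_smul]
  simp [mul_comm]

variable {φ : E → EReal}

theorem ConvexE.convex_epi (hφ : ConvexE φ) : Convex ℝ (epi φ) := by
  rintro ⟨x, s⟩ (hs : φ x ≤ s) ⟨y, t⟩ (ht : φ y ≤ t) a b ha hb hab
  show φ (a • x + b • y) ≤ ((a * s + b * t : ℝ) : EReal)
  calc φ (a • x + b • y) ≤ a * φ x + b * φ y := hφ x y a b ha hb hab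
    _ ≤ a * s + b * t := add_le_add (mul_le_mul_of_nonneg_left hs (by exact_mod_cast ha))
        (mul_le_mul_of_nonneg_left ht (by exact_mod_cast hb))
    _ = ((a * s + b * t : ℝ) : EReal) := by norm_cast

theorem le_fconj (φ : E → EReal) (y x : E) : ((⟪y, x⟫ : ℝ) : EReal) - φ x ≤ fconj φ y :=
  le_iSup (fun x => ((⟪y, x⟫ : ℝ) : EReal) - φ x) x

theorem fconj_le_iff {y : E} {c : ℝ} :
    fconj φ y ≤ c ↔ ∀ x (t : ℝ), φ x ≤ t → ⟪y, x⟫ - c ≤ t := by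
  simp only [fconj, iSup_le_iff]
  refine forall_congr' fun x => ⟨fun h t ht => ?_, fun h => ?_⟩
  · have := (EReal.sub_le_sub le_rfl ht).trans h
    rw [← EReal.coe_sub, EReal.coe_le_coe_iff] at this
    linarith
  · generalize φ x = e at h ⊢
    induction e using EReal.rec with
    | bot => linarith [h (⟪y, x⟫ - c - 1) bot_le]
    | coe e =>
      rw [← EReal.coe_sub, EReal.coe_le_coe_iff]
      linarith [h e le_rfl]
    | top => simp

theorem coe_inner_sub_le_of_fconj_le {y : E} {c : ℝ} (h : fconj φ y ≤ c) (x : E) :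
    ((⟪y, x⟫ - c : ℝ) : EReal) ≤ φ x :=
  EReal.le_of_forall_lt_iff_le.1 fun t ht => EReal.coe_le_coe_iff.2 (fconj_le_iff.1 h x t ht.le)

theorem fconj_ne_bot (hφ : ∃ x, φ x ≠ ⊤) (y : E) : fconj φ y ≠ ⊥ := by
  obtain ⟨x, hx⟩ := hφ
  refine ne_bot_of_le_ne_bot ?_ (le_fconj φ y x)
  simp [sub_eq_add_neg, hx]

theorem convex_epi_fconj (φ : E → EReal) : Convex ℝ (epi (fconj φ)) := by
  rintro ⟨y₁, c₁⟩ h₁ ⟨y₂, c₂⟩ h₂ a b ha hb hab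
  show fconj φ (a • y₁ + b • y₂) ≤ ((a * c₁ + b * c₂ : ℝ) : EReal)
  refine fconj_le_iff.2 fun x t ht => ?_
  have e : ⟪a • y₁ + b • y₂, x⟫ - (a * c₁ + b * c₂) =
      a * (⟪y₁, x⟫ - c₁) + b * (⟪y₂, x⟫ - c₂) := by
    rw [inner_add_left, real_inner_smul_left, real_inner_smul_left]
    ring
  rw [e]
  calc a * (⟪y₁, x⟫ - c₁) + b * (⟪y₂, x⟫ - c₂) ≤ a * t + b * t :=
        add_le_add (mul_le_mul_of_nonneg_left (fconj_le_iff.1 h₁ x t ht) ha)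
          (mul_le_mul_of_nonneg_left (fconj_le_iff.1 h₂ x t ht) hb)
    _ = t := by rw [← add_mul, hab, one_mul]

theorem HasSubgrad.ne_top {w x y : E} (h : HasSubgrad φ w x) (hy : φ y ≠ ⊤) : φ x ≠ ⊤ := by
  intro hx
  have := h y
  rw [hx, EReal.top_add_coe, top_le_iff] at this
  exact hy this

theorem HasSubgrad.fconj_le {u y : E} {s : ℝ} (h : HasSubgrad φ u y) (hs : φ y = s) :
    fconj φ u ≤ ((⟪u, y⟫ - s : ℝ) : EReal) := by
  refine fconj_le_iff.2 fun y' t ht => ?_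
  have := (h y').trans ht
  rw [hs, ← EReal.coe_add, EReal.coe_le_coe_iff, inner_sub_right] at this
  linarith

theorem HasSubgrad.of_add_inner {d w x : E}
    (h : HasSubgrad (fun x => φ x + ((⟪d, x⟫ : ℝ) : EReal)) w x) : HasSubgrad φ (w - d) x :=
  fun x' => by
    have e : ((⟪w - d, x' - x⟫ : ℝ) : EReal) = ⟪d, x⟫ + ⟪w, x' - x⟫ - ⟪d, x'⟫ := by
      rw [← EReal.coe_add, ← EReal.coe_sub, inner_sub_left, inner_sub_right, inner_sub_right]
      ring_nf
    rw [e]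
    convert EReal.sub_le_of_le_add (h x') using 1
    simp only [sub_eq_add_neg, add_assoc]

theorem exists_fconj_le_of_inner_add_mul_lt {w z : E} {γ c τ : ℝ} (hγ : γ < 0)
    (hepi : ∀ x (t : ℝ), φ x ≤ t → ⟪w, x⟫ + γ * t < c) (hz : c < ⟪w, z⟫ + γ * τ) :
    ∃ (y : E) (c' : ℝ), fconj φ y ≤ c' ∧ τ < ⟪y, z⟫ - c' := by
  refine ⟨(-γ)⁻¹ • w, (-γ)⁻¹ * c, fconj_le_iff.2 fun x t ht => ?_, ?_⟩
  · rw [real_inner_smul_left, ← mul_sub, inv_mul_le_iff₀ (neg_pos.2 hγ)]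
    linarith [hepi x t ht]
  · rw [real_inner_smul_left, ← mul_sub, lt_inv_mul_iff₀ (neg_pos.2 hγ)]
    linarith

theorem fconj_add_smul_le {y₀ w : E} {c₀ c k : ℝ} (h₀ : fconj φ y₀ ≤ c₀)
    (hw : ∀ x (t : ℝ), φ x ≤ t → ⟪w, x⟫ ≤ c) (hk : 0 ≤ k) :
    fconj φ (y₀ + k • w) ≤ ((c₀ + k * c : ℝ) : EReal) := by
  refine fconj_le_iff.2 fun x t ht => ?_
  rw [inner_add_left, real_inner_smul_left]
  nlinarith [fconj_le_iff.1 h₀ x t ht, hw x t ht]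

end Convex

section RelativeInterior

variable {E : Type*} [NormedAddCommGroup E] [InnerProductSpace ℝ E]

open Filter Topology in
theorem exists_pos_add_smul_sub_mem_of_mem_intrinsicInterior {S : Set E} {x₀ y : E}
    (hx₀ : x₀ ∈ intrinsicInterior ℝ S) (hy : y ∈ affineSpan ℝ S) :
    ∃ ε : ℝ, 0 < ε ∧ x₀ + ε • (x₀ - y) ∈ S := by
  obtain ⟨q, hq, rfl⟩ := hx₀
  let line : ℝ → affineSpan ℝ S := fun t =>
    ⟨t • ((q : E) - y) + q, by simpa using AffineSubspace.smul_vsub_vadd_mem _ t q.2 hy q.2⟩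
  have hline : Continuous line :=
    ((continuous_id.smul continuous_const).add continuous_const).subtype_mk _
  have hline0 : line 0 = q := Subtype.ext (by simp [line])
  have hev : ∀ᶠ t in 𝓝 (0 : ℝ), line t ∈ interior (Subtype.val ⁻¹' S) :=
    hline.continuousAt.preimage_mem_nhds (hline0 ▸ isOpen_interior.mem_nhds hq)
  obtain ⟨ε, hεS, hε⟩ := ((hev.filter_mono nhdsWithin_le_nhds).and
    (self_mem_nhdsWithin : Set.Ioi (0 : ℝ) ∈ 𝓝[>] 0)).exists
  exact ⟨ε, hε, by simpa [line, add_comm] using interior_subset hεS⟩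

theorem Submodule.inner_eq_zero_of_le_inner {L : Submodule ℝ E} {v : E} {c : ℝ}
    (h : ∀ x ∈ L, c ≤ ⟪v, x⟫) : ∀ x ∈ L, ⟪v, x⟫ = 0 := by
  intro x hx
  by_contra hne
  have := h (((c - 1) / ⟪v, x⟫) • x) (L.smul_mem _ hx)
  rw [real_inner_smul_right, div_mul_cancel₀ _ hne] at this
  linarith

theorem inner_eq_of_separates_of_mem_intrinsicInterior {S : Set E} {L : Submodule ℝ E}
    {w x₀ : E} (hx₀ : x₀ ∈ intrinsicInterior ℝ S) (hx₀L : x₀ ∈ L)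
    (h : ∀ y ∈ S, ∀ x ∈ L, ⟪w, y⟫ ≤ ⟪w, x⟫) : ∀ y ∈ S, ∀ x ∈ L, ⟪w, y⟫ = ⟪w, x⟫ := by
  have hL := Submodule.inner_eq_zero_of_le_inner fun x hx =>
    h x₀ (intrinsicInterior_subset hx₀) x hx
  have hS : ∀ y ∈ S, ⟪w, y⟫ ≤ 0 := fun y hy => (h y hy 0 L.zero_mem).trans_eq (inner_zero_right _)
  intro y hy x hx
  obtain ⟨ε, hε, hmem⟩ :=
    exists_pos_add_smul_sub_mem_of_mem_intrinsicInterior hx₀ (subset_affineSpan ℝ S hy)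
  have := hS _ hmem
  rw [inner_add_right, real_inner_smul_right, inner_sub_right, hL x₀ hx₀L] at this
  rw [hL x hx]
  nlinarith [hS y hy]

end RelativeInterior

section FenchelMoreau

variable {E : Type*} [NormedAddCommGroup E] [InnerProductSpace ℝ E] [FiniteDimensional ℝ E]
  {φ : E → EReal}

theorem exists_inner_add_mul_lt_of_not_le (hconv : ConvexE φ) (hlsc : LowerSemicontinuous φ)
    (hdom : ∃ x, φ x ≠ ⊤) {z : E} {τ : ℝ} (h : ¬φ z ≤ τ) :
    ∃ (w : E) (γ c : ℝ), γ ≤ 0 ∧ (∀ x (t : ℝ), φ x ≤ t → ⟪w, x⟫ + γ * t < c) ∧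
      c < ⟪w, z⟫ + γ * τ := by
  obtain ⟨F, c, hF, hFz⟩ := geometric_hahn_banach_closed_point hconv.convex_epi hlsc.isClosed_epi
    (show (z, τ) ∉ epi φ from h)
  obtain ⟨w, γ, hFw⟩ := exists_inner_add_mul_eq F
  have hepi : ∀ x (t : ℝ), φ x ≤ t → ⟪w, x⟫ + γ * t < c := fun x t ht => by
    simpa [hFw] using hF (x, t) ht
  refine ⟨w, γ, c, ?_, hepi, by simpa [hFw] using hFz⟩
  -- `γ ≤ 0` since the epigraph contains an upward vertical half-line
  obtain ⟨x₁, hx₁⟩ := hdom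
  by_contra! hγ
  set t := max (φ x₁).toReal ((c - ⟪w, x₁⟫) / γ)
  have h₁ := hepi x₁ t ((EReal.le_coe_toReal hx₁).trans (by exact_mod_cast le_max_left _ _))
  have h₂ := mul_le_mul_of_nonneg_left (le_max_right ((φ x₁).toReal) ((c - ⟪w, x₁⟫) / γ)) hγ.le
  rw [mul_div_cancel₀ _ hγ.ne'] at h₂
  linarith

theorem exists_fconj_le_lt (hφ : IsPCC φ) {z : E} {τ : ℝ} (hτ : (τ : EReal) < φ z) :
    ∃ (y : E) (c : ℝ), fconj φ y ≤ c ∧ τ < ⟪y, z⟫ - c := by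
  obtain ⟨hbot, hdom, hlsc, hconv⟩ := hφ
  obtain ⟨w, γ, c, hγ, hepi, hz⟩ := exists_inner_add_mul_lt_of_not_le hconv hlsc hdom hτ.not_ge
  rcases hγ.lt_or_eq with hγ | rfl
  · exact exists_fconj_le_of_inner_add_mul_lt hγ hepi hz
  -- the hyperplane is vertical: tilt it by a nonvertical one, which is what separates the
  -- epigraph from a point straight below the graph
  obtain ⟨x₁, hx₁⟩ := hdom
  set r₁ := (φ x₁).toReal
  have hr₁ : φ x₁ = r₁ := (EReal.coe_toReal hx₁ (hbot x₁)).symm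
  obtain ⟨w₁, γ₁, c₁, hγ₁, hepi₁, hx₁'⟩ := exists_inner_add_mul_lt_of_not_le hconv hlsc
    ⟨x₁, hx₁⟩ (z := x₁) (τ := r₁ - 1) (by rw [hr₁, EReal.coe_le_coe_iff]; linarith)
  have hγ₁' : γ₁ < 0 := hγ₁.lt_of_ne fun h => by
    have := hepi₁ x₁ r₁ hr₁.le
    rw [h] at this hx₁'
    linarith
  obtain ⟨y₀, c₀, h₀, -⟩ := exists_fconj_le_of_inner_add_mul_lt hγ₁' hepi₁ hx₁'
  simp only [zero_mul, add_zero] at hepi hz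
  have hδ : 0 < ⟪w, z⟫ - c := by linarith
  set k := (|τ - (⟪y₀, z⟫ - c₀)| + 1) / (⟪w, z⟫ - c)
  have hk : k * (⟪w, z⟫ - c) = |τ - (⟪y₀, z⟫ - c₀)| + 1 := div_mul_cancel₀ _ hδ.ne'
  refine ⟨y₀ + k • w, c₀ + k * c,
    fconj_add_smul_le h₀ (fun x t ht => (hepi x t ht).le) (div_nonneg (by positivity) hδ.le), ?_⟩
  rw [inner_add_left, real_inner_smul_left]
  linarith [le_abs_self (τ - (⟪y₀, z⟫ - c₀))]

theorem exists_fconj_ne_top (hφ : IsPCC φ) : ∃ y, fconj φ y ≠ ⊤ := by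
  obtain ⟨x₁, hx₁⟩ := hφ.2.1
  set r₁ := (φ x₁).toReal
  have hr₁ : φ x₁ = r₁ := (EReal.coe_toReal hx₁ (hφ.1 x₁)).symm
  obtain ⟨y, c, hc, -⟩ := exists_fconj_le_lt hφ (z := x₁) (τ := r₁ - 1)
    (by rw [hr₁, EReal.coe_lt_coe_iff]; linarith)
  exact ⟨y, ne_top_of_le_ne_top (EReal.coe_ne_top c) hc⟩

theorem le_fconj_fconj (hφ : IsPCC φ) (z : E) : φ z ≤ fconj (fconj φ) z := by
  refine EReal.ge_of_forall_gt_iff_ge.1 fun τ hτ => ?_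
  obtain ⟨y, c, hc, hτc⟩ := exists_fconj_le_lt hφ hτ
  calc (τ : EReal) ≤ ((⟪z, y⟫ - c : ℝ) : EReal) := by
        rw [real_inner_comm]
        exact_mod_cast hτc.le
    _ ≤ (⟪z, y⟫ : EReal) - fconj φ y := by
        rw [EReal.coe_sub]
        exact EReal.sub_le_sub le_rfl hc
    _ ≤ fconj (fconj φ) z := le_fconj _ z y

theorem HasSubgrad.of_fconj (hφ : IsPCC φ) {u y : E} (h : HasSubgrad (fconj φ) u y) :
    HasSubgrad φ y u := by
  obtain ⟨y₁, hy₁⟩ := exists_fconj_ne_top hφ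
  set s := (fconj φ y).toReal
  have hs : fconj φ y = s := (EReal.coe_toReal (h.ne_top hy₁) (fconj_ne_bot hφ.2.1 y)).symm
  have hu : φ u ≤ ((⟪u, y⟫ - s : ℝ) : EReal) := (le_fconj_fconj hφ u).trans (h.fconj_le hs)
  intro x
  calc φ u + ⟪y, x - u⟫ ≤ ((⟪u, y⟫ - s : ℝ) : EReal) + ⟪y, x - u⟫ := add_le_add hu le_rfl
    _ = ((⟪y, x⟫ - s : ℝ) : EReal) := by
        rw [← EReal.coe_add, inner_sub_right, real_inner_comm]
        ring_nf
    _ ≤ φ x := coe_inner_sub_le_of_fconj_le hs.le x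

end FenchelMoreau

section ChainRule

variable {E : Type*} [NormedAddCommGroup E] [InnerProductSpace ℝ E]

def strictSubgraphOn (L : Submodule ℝ E) (u₀ : E) (a : ℝ) : Set (E × ℝ) :=
  {p | p.1 ∈ L ∧ p.2 < a + ⟪u₀, p.1⟫}

theorem convex_strictSubgraphOn (L : Submodule ℝ E) (u₀ : E) (a : ℝ) :
    Convex ℝ (strictSubgraphOn L u₀ a) := by
  have h : strictSubgraphOn L u₀ a = LinearMap.fst ℝ E ℝ ⁻¹' L ∩ {p | p.2 - ⟪u₀, p.1⟫ < a} := by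
    ext p
    simp [strictSubgraphOn, sub_lt_iff_lt_add]
  rw [h]
  refine (L.convex.linear_preimage _).inter (convex_halfSpace_lt ⟨fun p q => ?_, fun c p => ?_⟩ a)
  · simp only [Prod.fst_add, Prod.snd_add, inner_add_right]
    ring
  · simp only [Prod.smul_fst, Prod.smul_snd, real_inner_smul_right, smul_eq_mul]
    ring

variable {φ : E → EReal}

theorem neg_of_separates_epi_strictSubgraphOn {L : Submodule ℝ E} {u₀ w : E} {a γ : ℝ}
    (hri : (intrinsicInterior ℝ {x | φ x < ⊤} ∩ L).Nonempty)
    (hle : ∀ p ∈ epi φ, ∀ q ∈ strictSubgraphOn L u₀ a, ⟪w, p.1⟫ + γ * p.2 ≤ ⟪w, q.1⟫ + γ * q.2)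
    (hlt : ∃ p ∈ epi φ, ∃ q ∈ strictSubgraphOn L u₀ a, ⟪w, p.1⟫ + γ * p.2 < ⟪w, q.1⟫ + γ * q.2) :
    γ < 0 := by
  obtain ⟨x₀, hx₀, hx₀L⟩ := hri
  have hdom : ∀ y, φ y < ⊤ → ∃ t : ℝ, (y, t) ∈ epi φ := fun y hy =>
    ⟨_, EReal.le_coe_toReal hy.ne⟩
  obtain ⟨t₀, ht₀⟩ := hdom x₀ (intrinsicInterior_subset (s := {x | φ x < ⊤}) hx₀)
  have hγ : γ ≤ 0 := by
    set s := a + ⟪u₀, x₀⟫ - 1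
    have := hle (x₀, max t₀ s + 1)
      (show φ x₀ ≤ ((max t₀ s + 1 : ℝ) : EReal) from
        ht₀.trans (by exact_mod_cast (le_max_left t₀ s).trans (lt_add_one _).le))
      (x₀, s) ⟨hx₀L, by simp [s]⟩
    nlinarith [le_max_right t₀ s]
  -- a vertical hyperplane would separate `dom φ` from `L`, which meets its relative interior
  refine hγ.lt_of_ne fun hγ0 => ?_
  subst hγ0
  have heq := inner_eq_of_separates_of_mem_intrinsicInterior hx₀ hx₀L fun y hy x hx => by
    obtain ⟨t, ht⟩ := hdom y hy
    simpa using hle (y, t) ht (x, a + ⟪u₀, x⟫ - 1) ⟨hx, by simp⟩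
  obtain ⟨p, hp, q, hq, hlt⟩ := hlt
  simp only [zero_mul, add_zero] at hlt
  exact hlt.ne (heq p.1 (lt_of_le_of_lt hp (EReal.coe_lt_top _)) q.1 hq.1)

variable [FiniteDimensional ℝ E]

theorem exists_affine_minorant_extension (hconv : Convex ℝ (epi φ)) {L : Submodule ℝ E}
    {u₀ : E} {a : ℝ} (h : ∀ x ∈ L, ((a + ⟪u₀, x⟫ : ℝ) : EReal) ≤ φ x)
    (hri : (intrinsicInterior ℝ {x | φ x < ⊤} ∩ L).Nonempty) :
    ∃ u : E, (∀ x ∈ L, ⟪u, x⟫ = ⟪u₀, x⟫) ∧ ∀ x, ((a + ⟪u, x⟫ : ℝ) : EReal) ≤ φ x := by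
  obtain ⟨x₀, hx₀, hx₀L⟩ := hri
  have hx₀dom : x₀ ∈ {x | φ x < ⊤} := intrinsicInterior_subset hx₀
  obtain ⟨t₀, ht₀⟩ : ∃ t₀ : ℝ, (x₀, t₀) ∈ epi φ := ⟨_, EReal.le_coe_toReal hx₀dom.ne⟩
  have hdisj : Disjoint (epi φ) (strictSubgraphOn L u₀ a) := Set.disjoint_left.2 fun p hp hq =>
    (h p.1 hq.1).not_gt (lt_of_le_of_lt hp (EReal.coe_lt_coe_iff.2 hq.2))
  obtain ⟨F, hle, hlt⟩ := hconv.exists_dual_properly_separating (convex_strictSubgraphOn L u₀ a)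
    ⟨_, ht₀⟩ ⟨(0, a - 1), L.zero_mem, by simp⟩ hdisj
  obtain ⟨w, γ, hF⟩ := exists_inner_add_mul_eq F
  simp only [hF] at hle hlt
  have hγ := neg_of_separates_epi_strictSubgraphOn ⟨x₀, hx₀, hx₀L⟩ hle hlt
  obtain ⟨u, hw⟩ : ∃ u : E, w = (-γ) • u :=
    ⟨(-γ)⁻¹ • w, by rw [smul_smul, mul_inv_cancel₀ (neg_ne_zero.2 hγ.ne), one_smul]⟩
  -- divide the separation by `-γ`, then let the height in the subgraph tend to its supremum
  have hsep : ∀ y (t : ℝ), φ y ≤ t → ∀ x ∈ L, ⟪u, y⟫ - t ≤ ⟪u, x⟫ - (a + ⟪u₀, x⟫) := by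
    intro y t ht x hx
    have hs : ∀ s < a + ⟪u₀, x⟫, s ≤ ⟪u, x⟫ - (⟪u, y⟫ - t) := fun s hs => by
      have := hle (y, t) ht (x, s) ⟨hx, hs⟩
      rw [hw, real_inner_smul_left, real_inner_smul_left] at this
      dsimp only at this
      have := le_of_mul_le_mul_left (a := -γ) (b := ⟪u, y⟫ - t) (c := ⟪u, x⟫ - s)
        (by linarith) (neg_pos.2 hγ)
      linarith
    linarith [le_of_forall_lt_imp_le_of_dense hs]
  refine ⟨u, fun x hx => ?_, fun x => EReal.le_of_forall_lt_iff_le.1 fun t ht => ?_⟩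
  · have := Submodule.inner_eq_zero_of_le_inner (v := u - u₀) (c := ⟪u, x₀⟫ - t₀ + a)
      (fun x hx => by rw [inner_sub_left]; linarith [hsep x₀ t₀ ht₀ x hx]) x hx
    rwa [inner_sub_left, sub_eq_zero] at this
  · have := hsep x t ht.le 0 L.zero_mem
    simp only [inner_zero_right, add_zero] at this
    exact_mod_cast (by linarith : a + ⟪u, x⟫ ≤ t)

theorem HasSubgrad.exists_adjoint_eq {F : Type*} [NormedAddCommGroup F] [InnerProductSpace ℝ F]
    [FiniteDimensional ℝ F] (hconv : Convex ℝ (epi φ)) (hbot : ∀ x, φ x ≠ ⊥) {A : F →ₗ[ℝ] E}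
    {w z : F} (h : HasSubgrad (φ ∘ A) w z)
    (hri : (intrinsicInterior ℝ {x | φ x < ⊤} ∩ Set.range A).Nonempty) :
    ∃ u : E, LinearMap.adjoint A u = w ∧ HasSubgrad φ u (A z) := by
  obtain ⟨_, hx₀, ζ, rfl⟩ := hri
  set r := (φ (A z)).toReal
  have hx₀dom : A ζ ∈ {x | φ x < ⊤} := intrinsicInterior_subset hx₀
  have hr : φ (A z) = r := (EReal.coe_toReal (h.ne_top hx₀dom.ne) (hbot _)).symm
  -- `φ ∘ A` is constant along `ker A`, so `w ⊥ ker A`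
  have hker : w ∈ (LinearMap.ker A)ᗮ := by
    refine (Submodule.mem_orthogonal' _ _).2 (Submodule.inner_eq_zero_of_le_inner (c := 0)
      fun k hk => ?_)
    have := h (z - k)
    rw [Function.comp_apply, Function.comp_apply, map_sub, LinearMap.mem_ker.1 hk, sub_zero, hr,
      ← EReal.coe_add, EReal.coe_le_coe_iff, sub_sub_cancel_left, inner_neg_right] at this
    linarith
  obtain ⟨u₀, rfl⟩ : w ∈ LinearMap.range (LinearMap.adjoint A) := A.orthogonal_ker ▸ hker
  have hminL : ∀ x ∈ LinearMap.range A, ((r - ⟪u₀, A z⟫ + ⟪u₀, x⟫ : ℝ) : EReal) ≤ φ x := by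
    rintro _ ⟨ζ', rfl⟩
    have := h ζ'
    rw [Function.comp_apply, Function.comp_apply, hr, ← EReal.coe_add,
      LinearMap.adjoint_inner_left, map_sub, inner_sub_right] at this
    convert this using 2
    ring
  obtain ⟨u, hu, hmin⟩ := exists_affine_minorant_extension hconv hminL
    ⟨A ζ, hx₀, LinearMap.mem_range_self A ζ⟩
  refine ⟨u, ext_inner_right ℝ fun ζ' => ?_, fun x => ?_⟩
  · rw [LinearMap.adjoint_inner_left, LinearMap.adjoint_inner_left,
      hu _ (LinearMap.mem_range_self A ζ')]
  · rw [hr, ← EReal.coe_add]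
    convert hmin x using 2
    rw [inner_sub_right, hu _ (LinearMap.mem_range_self A z)]
    ring

end ChainRule

section Saddle

variable {E₁ E₂ F : Type*} [NormedAddCommGroup E₁] [InnerProductSpace ℝ E₁]
  [FiniteDimensional ℝ E₁] [NormedAddCommGroup E₂] [InnerProductSpace ℝ E₂]
  [FiniteDimensional ℝ E₂] [NormedAddCommGroup F] [InnerProductSpace ℝ F] [FiniteDimensional ℝ F]
  {f : E₁ → EReal} {g : E₂ → EReal} {M : E₁ →ₗ[ℝ] F} {C : E₂ →ₗ[ℝ] F} {d : F}

theorem isSaddle_of_hasSubgrad {us : E₁} {vs : E₂} {z : F} (hf : ∀ x, f x ≠ ⊥)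
    (hf' : ∃ x, f x ≠ ⊤) (hg : ∀ x, g x ≠ ⊥) (hg' : ∃ x, g x ≠ ⊤)
    (hfu : HasSubgrad f (-LinearMap.adjoint M z) us)
    (hgv : HasSubgrad g (-LinearMap.adjoint C z) vs) (hfeas : M us + C vs = d) :
    IsSaddle f g M C d us vs z := by
  obtain ⟨a, ha⟩ : ∃ a : ℝ, f us = a :=
    ⟨_, (EReal.coe_toReal (hfu.ne_top hf'.choose_spec) (hf us)).symm⟩
  obtain ⟨b, hb⟩ : ∃ b : ℝ, g vs = b :=
    ⟨_, (EReal.coe_toReal (hgv.ne_top hg'.choose_spec) (hg vs)).symm⟩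
  have hL : ∀ ζ, Lag f g M C d us vs ζ = ((a + b : ℝ) : EReal) := fun ζ => by
    simp [Lag, ha, hb, hfeas]
  refine ⟨by rw [hL]; exact EReal.coe_ne_top _, by rw [hL]; exact EReal.coe_ne_bot _,
    fun u v => ?_, fun ζ => ((hL ζ).trans (hL z).symm).le⟩
  calc Lag f g M C d us vs z
      = ((a + ⟪-LinearMap.adjoint M z, u - us⟫ : ℝ) : EReal) +
          ((b + ⟪-LinearMap.adjoint C z, v - vs⟫ : ℝ) : EReal) +
          ((⟪M u + C v - d, z⟫ : ℝ) : EReal) := by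
        rw [hL, ← EReal.coe_add, ← EReal.coe_add, ← hfeas]
        congr 1
        simp only [inner_neg_left, LinearMap.adjoint_inner_left, inner_sub_right, inner_add_right,
          real_inner_comm z]
        ring
    _ ≤ Lag f g M C d u v z := by
        rw [EReal.coe_add, EReal.coe_add, ← ha, ← hb]
        exact add_le_add (add_le_add (hfu u) (hgv v)) le_rfl

end Saddle

/-- under the relative-interior conditions
`ri(dom f*) ∩ range M* ≠ ∅` and `ri(dom g*) ∩ range C* ≠ ∅`, every `(z*, w*)` in the
extended solution set `S_e` comes from a saddle point: there exist `u*, v*` with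
`w* = d - Cv*`, `w* = Mu*`, and `(u*, v*, z*)` a saddle point of `L`. -/
theorem extSolSet_subset_saddle (m1 m2 n : ℕ)
    (f : EuclideanSpace ℝ (Fin m1) → EReal) (g : EuclideanSpace ℝ (Fin m2) → EReal)
    (hf : IsPCC f) (hg : IsPCC g)
    (M : EuclideanSpace ℝ (Fin m1) →ₗ[ℝ] EuclideanSpace ℝ (Fin n))
    (C : EuclideanSpace ℝ (Fin m2) →ₗ[ℝ] EuclideanSpace ℝ (Fin n))
    (d : EuclideanSpace ℝ (Fin n))
    (hA2 : (intrinsicInterior ℝ {w : EuclideanSpace ℝ (Fin m1) | fconj f w < ⊤} ∩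
      Set.range (LinearMap.adjoint M)).Nonempty)
    (hA3 : (intrinsicInterior ℝ {w : EuclideanSpace ℝ (Fin m2) | fconj g w < ⊤} ∩
      Set.range (LinearMap.adjoint C)).Nonempty)
    (zstar wstar : EuclideanSpace ℝ (Fin n))
    (hmem : (zstar, wstar) ∈ extSolSet f g M C d) :
    ∃ (ustar : EuclideanSpace ℝ (Fin m1)) (vstar : EuclideanSpace ℝ (Fin m2)),
      wstar = d - C vstar ∧ wstar = M ustar ∧ IsSaddle f g M C d ustar vstar zstar := by
  obtain ⟨hs₁, hs₂⟩ := hmem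
  obtain ⟨_, hx₁, ζ₁, rfl⟩ := hA2
  obtain ⟨_, hx₂, ζ₂, rfl⟩ := hA3
  -- definitionally, `hOne f M = fconj f ∘ (-M†)` and `hTwo g C d = fconj g ∘ (-C†) + ⟪d, ·⟫`
  obtain ⟨ustar, hMu, hu⟩ := HasSubgrad.exists_adjoint_eq (A := -LinearMap.adjoint M)
    (convex_epi_fconj f) (fconj_ne_bot hf.2.1) hs₁ ⟨_, hx₁, -ζ₁, by simp⟩
  obtain ⟨vstar, hCv, hv⟩ := HasSubgrad.exists_adjoint_eq (A := -LinearMap.adjoint C)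
    (convex_epi_fconj g) (fconj_ne_bot hg.2.1) hs₂.of_add_inner ⟨_, hx₂, -ζ₂, by simp⟩
  simp only [map_neg, LinearMap.adjoint_adjoint, LinearMap.neg_apply, neg_inj] at hMu hCv
  have hCv' : C vstar = d - wstar := by rw [← neg_sub, ← hCv, neg_neg]
  refine ⟨ustar, vstar, by rw [hCv', sub_sub_cancel], hMu.symm,
    isSaddle_of_hasSubgrad hf.1 hf.2.1 hg.1 hg.2.1 (hu.of_fconj hf) (hv.of_fconj hg) ?_⟩
  rw [hMu, hCv', add_sub_cancel]
end
end

section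
/- If at some iteration k ≥ 1 the PMM stopping criterion holds, i.e. ‖Mu_k+Cv_k−d‖+‖Mu_k−w_{k-1}‖ = 0, then (u_k, v_k, x_k) is a saddle point of the Lagrangian L, where x_k = z_{k-1}+λw_{k-1}+λ(Cv_k−d). -/
open scoped RealInnerProductSpace

noncomputable section

/-
The stopping test says that `(u_k, v_k)` is feasible, `M u_k + C v_k = d`, and that
`w_{k-1} = M u_k`. Each subproblem minimizes a convex function plus a smooth quadratic, so its
minimizer satisfies the first-order condition: `-M* p ∈ ∂f(u_k)` and `-C* q ∈ ∂g(v_k)`, with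
`p, q` the gradients of the quadratic parts. Under the stopping test both `p` and `q` equal
`x_k`, and feasibility together with these two subgradient inclusions is exactly the saddle
point property of the Lagrangian.
-/

open Filter Topology

lemma EReal.ne_top_of_add_coe_le_add_coe {a b : EReal} {r s : ℝ} (h : a + r ≤ b + s)
    (hb : b ≠ ⊤) : a ≠ ⊤ := by
  rintro rfl
  rw [EReal.top_add_coe, top_le_iff] at h
  exact EReal.add_ne_top hb (EReal.coe_ne_top s) h

lemma le_of_forall_le_add_mul {a b K : ℝ} (h : ∀ t : ℝ, 0 < t → t ≤ 1 → a ≤ b + t * K) :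
    a ≤ b := by
  have hlim : Tendsto (fun t : ℝ => b + t * K) (𝓝[>] 0) (𝓝 b) :=
    ((by fun_prop : Continuous fun t : ℝ => b + t * K).tendsto' 0 b (by simp)).mono_left
      nhdsWithin_le_nhds
  refine ge_of_tendsto hlim ?_
  filter_upwards [Ioc_mem_nhdsGT one_pos] with t ht using h t ht.1 ht.2

lemma inner_add_half_mul_norm_sq_add_smul {F : Type*} [NormedAddCommGroup F]
    [InnerProductSpace ℝ F] (c y δ : F) (lam t : ℝ) :
    ⟪c, y + t • δ⟫ + lam / 2 * ‖y + t • δ‖ ^ 2 =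
      ⟪c, y⟫ + lam / 2 * ‖y‖ ^ 2 + t * ⟪c + lam • y, δ⟫ + t ^ 2 * (lam / 2 * ‖δ‖ ^ 2) := by
  rw [inner_add_right, real_inner_smul_right, norm_add_sq_real, real_inner_smul_right,
    norm_smul, Real.norm_eq_abs, mul_pow, sq_abs, inner_add_left, real_inner_smul_left]
  ring

section ConvexE

variable {E : Type*} [NormedAddCommGroup E] [InnerProductSpace ℝ E] {φ : E → EReal}

/-- `ℓ` bounds the one-sided directional derivative of `h` at `x₀` towards `x`. -/
lemma ConvexE.le_add_of_forall_add_le_add (hφ : ConvexE φ) (hbot : ∀ x, φ x ≠ ⊥)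
    {h : E → ℝ} {x₀ x : E} {ℓ K : ℝ}
    (hmin : ∀ y, φ x₀ + (h x₀ : EReal) ≤ φ y + (h y : EReal))
    (hseg : ∀ t : ℝ, 0 < t → t ≤ 1 → h (t • x + (1 - t) • x₀) ≤ h x₀ + t * ℓ + t ^ 2 * K) :
    φ x₀ ≤ φ x + (ℓ : EReal) := by
  by_cases hx : φ x = ⊤
  · rw [hx, EReal.top_add_coe]
    exact le_top
  obtain ⟨a, ha⟩ : ∃ a : ℝ, φ x₀ = a :=
    ⟨_, (EReal.coe_toReal (EReal.ne_top_of_add_coe_le_add_coe (hmin x) hx) (hbot x₀)).symm⟩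
  obtain ⟨b, hb⟩ : ∃ b : ℝ, φ x = b := ⟨_, (EReal.coe_toReal hx (hbot x)).symm⟩
  rw [ha, hb, ← EReal.coe_add, EReal.coe_le_coe_iff]
  refine le_of_forall_le_add_mul (K := K) fun t ht ht1 => ?_
  have hconv : φ (t • x + (1 - t) • x₀) ≤ ((t * b + (1 - t) * a : ℝ) : EReal) := by
    simpa [ha, hb] using hφ x x₀ t (1 - t) ht.le (by linarith) (by ring)
  have hstep : a + h x₀ ≤ t * b + (1 - t) * a + h (t • x + (1 - t) • x₀) := by
    have := (hmin _).trans (add_le_add_left hconv _)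
    rwa [ha, ← EReal.coe_add, ← EReal.coe_add, EReal.coe_le_coe_iff] at this
  have hquad := hseg t ht ht1
  refine le_of_mul_le_mul_left ?_ ht
  linarith

variable {F : Type*} [NormedAddCommGroup F] [InnerProductSpace ℝ F]

lemma ConvexE.le_add_inner_of_forall_add_quadratic_le (hφ : ConvexE φ) (hbot : ∀ x, φ x ≠ ⊥)
    (A : E →ₗ[ℝ] F) (c e : F) (lam : ℝ) {x₀ : E}
    (hmin : ∀ x, φ x₀ + ((⟪c, A x₀ - e⟫ + lam / 2 * ‖A x₀ - e‖ ^ 2 : ℝ) : EReal) ≤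
      φ x + ((⟪c, A x - e⟫ + lam / 2 * ‖A x - e‖ ^ 2 : ℝ) : EReal)) (x : E) :
    φ x₀ ≤ φ x + ((⟪c + lam • (A x₀ - e), A x - A x₀⟫ : ℝ) : EReal) := by
  refine hφ.le_add_of_forall_add_le_add hbot
    (h := fun x => ⟪c, A x - e⟫ + lam / 2 * ‖A x - e‖ ^ 2) hmin (K := lam / 2 * ‖A x - A x₀‖ ^ 2)
    fun t _ _ => le_of_eq ?_
  have hseg : A (t • x + (1 - t) • x₀) - e = (A x₀ - e) + t • (A x - A x₀) := by
    rw [map_add, map_smul, map_smul]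
    module
  rw [hseg, inner_add_half_mul_norm_sq_add_smul]

end ConvexE

section Saddle

variable {E₁ E₂ F : Type*} [NormedAddCommGroup E₁] [InnerProductSpace ℝ E₁]
  [NormedAddCommGroup E₂] [InnerProductSpace ℝ E₂] [NormedAddCommGroup F] [InnerProductSpace ℝ F]
  {f : E₁ → EReal} {g : E₂ → EReal} {M : E₁ →ₗ[ℝ] F} {C : E₂ →ₗ[ℝ] F} {d : F}
  {us : E₁} {vs : E₂} {z : F}

lemma lag_eq_add_of_feasible (hfeas : M us + C vs = d) (ζ : F) :
    Lag f g M C d us vs ζ = f us + g vs := by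
  rw [Lag, hfeas, sub_self, inner_zero_left, EReal.coe_zero, add_zero]

lemma isSaddle_of_feasible_of_le_add_inner (hfeas : M us + C vs = d)
    (hftop : f us ≠ ⊤) (hfbot : f us ≠ ⊥) (hgtop : g vs ≠ ⊤) (hgbot : g vs ≠ ⊥)
    (hf : ∀ u, f us ≤ f u + ((⟪z, M u - M us⟫ : ℝ) : EReal))
    (hg : ∀ v, g vs ≤ g v + ((⟪z, C v - C vs⟫ : ℝ) : EReal)) :
    IsSaddle f g M C d us vs z := by
  refine ⟨?_, ?_, fun u v => ?_, fun ζ => ?_⟩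
  · rw [lag_eq_add_of_feasible hfeas]
    exact EReal.add_ne_top hftop hgtop
  · rw [lag_eq_add_of_feasible hfeas]
    exact EReal.add_ne_bot_iff.mpr ⟨hfbot, hgbot⟩
  · have hsplit : ⟪M u + C v - d, z⟫ = ⟪z, M u - M us⟫ + ⟪z, C v - C vs⟫ := by
      rw [← hfeas, real_inner_comm, ← inner_add_right]
      congr 1
      abel
    calc Lag f g M C d us vs z = f us + g vs := lag_eq_add_of_feasible hfeas z
      _ ≤ (f u + ((⟪z, M u - M us⟫ : ℝ) : EReal)) + (g v + ((⟪z, C v - C vs⟫ : ℝ) : EReal)) :=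
        add_le_add (hf u) (hg v)
      _ = Lag f g M C d u v z := by
        rw [Lag, hsplit, EReal.coe_add]
        abel
  · rw [lag_eq_add_of_feasible hfeas, lag_eq_add_of_feasible hfeas]

end Saddle

theorem pmm_stop_gives_saddle_general (m1 m2 n : ℕ)
    (f : EuclideanSpace ℝ (Fin m1) → EReal) (g : EuclideanSpace ℝ (Fin m2) → EReal)
    (hf : IsPCC f) (hg : IsPCC g)
    (M : EuclideanSpace ℝ (Fin m1) →ₗ[ℝ] EuclideanSpace ℝ (Fin n))
    (C : EuclideanSpace ℝ (Fin m2) →ₗ[ℝ] EuclideanSpace ℝ (Fin n))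
    (d : EuclideanSpace ℝ (Fin n))
    (lam : ℝ)
    (zp wp : EuclideanSpace ℝ (Fin n))
    (vk : EuclideanSpace ℝ (Fin m2)) (uk : EuclideanSpace ℝ (Fin m1))
    (hvk : ∀ v' : EuclideanSpace ℝ (Fin m2),
      g vk + ((⟪zp + lam • wp, C vk - d⟫ + lam / 2 * ‖C vk - d‖ ^ 2 : ℝ) : EReal) ≤
        g v' + ((⟪zp + lam • wp, C v' - d⟫ + lam / 2 * ‖C v' - d‖ ^ 2 : ℝ) : EReal))
    (huk : ∀ u' : EuclideanSpace ℝ (Fin m1),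
      f uk + ((⟪zp + lam • (C vk - d), M uk⟫ + lam / 2 * ‖M uk‖ ^ 2 : ℝ) : EReal) ≤
        f u' + ((⟪zp + lam • (C vk - d), M u'⟫ + lam / 2 * ‖M u'‖ ^ 2 : ℝ) : EReal))
    (xk : EuclideanSpace ℝ (Fin n))
    (hxk : xk = zp + lam • wp + lam • (C vk - d))
    (hstop : ‖M uk + C vk - d‖ + ‖M uk - wp‖ = 0) :
    IsSaddle f g M C d uk vk xk := by
  obtain ⟨hres, hdiff⟩ := (add_eq_zero_iff_of_nonneg (norm_nonneg _) (norm_nonneg _)).mp hstop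
  have hfeas : M uk + C vk = d := sub_eq_zero.mp (norm_eq_zero.mp hres)
  have hw : M uk = wp := sub_eq_zero.mp (norm_eq_zero.mp hdiff)
  have hsubf (u) : f uk ≤ f u + ((⟪xk, M u - M uk⟫ : ℝ) : EReal) := by
    convert hf.2.2.2.le_add_inner_of_forall_add_quadratic_le hf.1 M (zp + lam • (C vk - d)) 0 lam
      (x₀ := uk) (by simpa only [sub_zero] using huk) u using 5
    rw [hxk, ← hw, sub_zero]
    abel
  have hsubg (v) : g vk ≤ g v + ((⟪xk, C v - C vk⟫ : ℝ) : EReal) := by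
    rw [hxk]
    exact hg.2.2.2.le_add_inner_of_forall_add_quadratic_le hg.1 C _ d lam hvk v
  obtain ⟨u₀, hu₀⟩ := hf.2.1
  obtain ⟨v₀, hv₀⟩ := hg.2.1
  exact isSaddle_of_feasible_of_le_add_inner hfeas
    (EReal.ne_top_of_add_coe_le_add_coe (huk u₀) hu₀) (hf.1 uk)
    (EReal.ne_top_of_add_coe_le_add_coe (hvk v₀) hv₀) (hg.1 vk) hsubf hsubg

/-- if the PMM stopping criterion `‖Mu_k + Cv_k - d‖ + ‖Mu_k - w_{k-1}‖ = 0`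
holds, then `(u_k, v_k, x_k)` is a saddle point of the Lagrangian `L`, where
`x_k = z_{k-1} + λw_{k-1} + λ(Cv_k - d)`. -/
theorem pmm_stop_gives_saddle (m1 m2 n : ℕ)
    (f : EuclideanSpace ℝ (Fin m1) → EReal) (g : EuclideanSpace ℝ (Fin m2) → EReal)
    (hf : IsPCC f) (hg : IsPCC g)
    (M : EuclideanSpace ℝ (Fin m1) →ₗ[ℝ] EuclideanSpace ℝ (Fin n))
    (C : EuclideanSpace ℝ (Fin m2) →ₗ[ℝ] EuclideanSpace ℝ (Fin n))
    (d : EuclideanSpace ℝ (Fin n))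
    (lam : ℝ) (hlam : 0 < lam)
    (zp wp : EuclideanSpace ℝ (Fin n))
    (vk : EuclideanSpace ℝ (Fin m2)) (uk : EuclideanSpace ℝ (Fin m1))
    (hvk : ∀ v' : EuclideanSpace ℝ (Fin m2),
      g vk + ((⟪zp + lam • wp, C vk - d⟫ + lam / 2 * ‖C vk - d‖ ^ 2 : ℝ) : EReal) ≤
        g v' + ((⟪zp + lam • wp, C v' - d⟫ + lam / 2 * ‖C v' - d‖ ^ 2 : ℝ) : EReal))
    (huk : ∀ u' : EuclideanSpace ℝ (Fin m1),
      f uk + ((⟪zp + lam • (C vk - d), M uk⟫ + lam / 2 * ‖M uk‖ ^ 2 : ℝ) : EReal) ≤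
        f u' + ((⟪zp + lam • (C vk - d), M u'⟫ + lam / 2 * ‖M u'‖ ^ 2 : ℝ) : EReal))
    (xk : EuclideanSpace ℝ (Fin n))
    (hxk : xk = zp + lam • wp + lam • (C vk - d))
    (hstop : ‖M uk + C vk - d‖ + ‖M uk - wp‖ = 0) :
    IsSaddle f g M C d uk vk xk :=
  pmm_stop_gives_saddle_general m1 m2 n f g hf hg M C d lam zp wp vk uk hvk huk xk hxk hstop
end
end

section
/- For every j ≥ 1 the PMM quantities satisfy the identity λ‖Cv_j−d+w_{j-1}‖² + λ⟨d−Cv_j−Mu_j, w_{j-1}−Mu_j⟩ = (λ/2)‖Cv_j−d+w_{j-1}‖² + (λ/2)(‖d−Cv_j−Mu_j‖² + ‖w_{j-1}−Mu_j‖²), and consequently γ_j ≥ τ/2, where τ = min{λ, 1/λ}. -/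
open scoped RealInnerProductSpace

noncomputable section

set_option maxHeartbeats 1000000 in
/-- the PMM quantities satisfy
`λ‖Cv_j - d + w_{j-1}‖² + λ⟪d - Cv_j - Mu_j, w_{j-1} - Mu_j⟫
  = (λ/2)‖Cv_j - d + w_{j-1}‖² + (λ/2)(‖d - Cv_j - Mu_j‖² + ‖w_{j-1} - Mu_j‖²)`,
and consequently `γ_j ≥ τ/2`, where `τ = min{λ, 1/λ}`. -/
theorem pmm_gamma_lower_bound (m1 m2 n : ℕ)
    (f : EuclideanSpace ℝ (Fin m1) → EReal) (g : EuclideanSpace ℝ (Fin m2) → EReal)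
    (hf : IsPCC f) (hg : IsPCC g)
    (M : EuclideanSpace ℝ (Fin m1) →ₗ[ℝ] EuclideanSpace ℝ (Fin n))
    (C : EuclideanSpace ℝ (Fin m2) →ₗ[ℝ] EuclideanSpace ℝ (Fin n))
    (d : EuclideanSpace ℝ (Fin n))
    (lam : ℝ) (hlam : 0 < lam)
    (zp wp : EuclideanSpace ℝ (Fin n))
    (vj : EuclideanSpace ℝ (Fin m2)) (uj : EuclideanSpace ℝ (Fin m1))
    (hvj : ∀ v' : EuclideanSpace ℝ (Fin m2),
      g vj + ((⟪zp + lam • wp, C vj - d⟫ + lam / 2 * ‖C vj - d‖ ^ 2 : ℝ) : EReal) ≤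
        g v' + ((⟪zp + lam • wp, C v' - d⟫ + lam / 2 * ‖C v' - d‖ ^ 2 : ℝ) : EReal))
    (huj : ∀ u' : EuclideanSpace ℝ (Fin m1),
      f uj + ((⟪zp + lam • (C vj - d), M uj⟫ + lam / 2 * ‖M uj‖ ^ 2 : ℝ) : EReal) ≤
        f u' + ((⟪zp + lam • (C vj - d), M u'⟫ + lam / 2 * ‖M u'‖ ^ 2 : ℝ) : EReal))
    (hnz : ‖M uj + C vj - d‖ + ‖M uj - wp‖ ≠ 0)
    (γj τ : ℝ)
    (hγ : γj = (lam * ‖C vj - d + wp‖ ^ 2 + lam * ⟪d - C vj - M uj, wp - M uj⟫) /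
      (‖M uj + C vj - d‖ ^ 2 + lam ^ 2 * ‖M uj - wp‖ ^ 2))
    (hτ : τ = min lam (1 / lam)) :
    lam * ‖C vj - d + wp‖ ^ 2 + lam * ⟪d - C vj - M uj, wp - M uj⟫ =
      lam / 2 * ‖C vj - d + wp‖ ^ 2 +
        lam / 2 * (‖d - C vj - M uj‖ ^ 2 + ‖wp - M uj‖ ^ 2) ∧
    τ / 2 ≤ γj := by
  have hA : C vj - d + wp = (wp - M uj) - (d - C vj - M uj) := by abel
  have hnorm : ‖C vj - d + wp‖ ^ 2 =
      ‖wp - M uj‖ ^ 2 - 2 * ⟪wp - M uj, d - C vj - M uj⟫ + ‖d - C vj - M uj‖ ^ 2 := by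
    rw [hA]; exact norm_sub_sq_real _ _
  have hsym : ⟪d - C vj - M uj, wp - M uj⟫ = ⟪wp - M uj, d - C vj - M uj⟫ :=
    real_inner_comm _ _
  have hid : lam * ‖C vj - d + wp‖ ^ 2 + lam * ⟪d - C vj - M uj, wp - M uj⟫ =
      lam / 2 * ‖C vj - d + wp‖ ^ 2 +
        lam / 2 * (‖d - C vj - M uj‖ ^ 2 + ‖wp - M uj‖ ^ 2) := by
    rw [hsym]; nlinarith [hnorm]
  refine ⟨hid, ?_⟩
  have hP : ‖M uj + C vj - d‖ = ‖d - C vj - M uj‖ := by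
    rw [← norm_neg]; congr 1; abel
  have hQ : ‖M uj - wp‖ = ‖wp - M uj‖ := norm_sub_rev _ _
  set s := ‖d - C vj - M uj‖ with hs
  set t := ‖wp - M uj‖ with ht
  have hs0 : 0 ≤ s := norm_nonneg _
  have ht0 : 0 ≤ t := norm_nonneg _
  have hst : 0 < s + t := by
    rcases lt_or_eq_of_le (add_nonneg hs0 ht0) with h | h
    · exact h
    · exact absurd (by rw [hP, hQ, ← h]) hnz
  have hden : 0 < s ^ 2 + lam ^ 2 * t ^ 2 := by
    have h' : 0 < s ∨ 0 < t := by
      by_contra h; push_neg at h; nlinarith [h.1, h.2]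
    rcases h' with h | h
    · nlinarith [mul_pos h h, mul_nonneg (mul_nonneg (sq_nonneg lam) ht0) ht0]
    · nlinarith [mul_pos h h, mul_pos (mul_pos hlam hlam) (mul_pos h h), sq_nonneg s]
  rw [hγ, hP, hQ, hid]
  rw [le_div_iff₀ hden]
  have hτ1 : τ ≤ lam := hτ ▸ min_le_left _ _
  have hτ2 : τ * lam ≤ 1 := by
    have := hτ ▸ min_le_right lam (1 / lam)
    calc τ * lam ≤ (1 / lam) * lam := by nlinarith
    _ = 1 := by field_simp
  have h1 : τ * s ^ 2 ≤ lam * s ^ 2 :=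
    mul_le_mul_of_nonneg_right hτ1 (sq_nonneg s)
  have h2 : τ * (lam ^ 2 * t ^ 2) ≤ lam * t ^ 2 := by
    have h3 : 0 ≤ lam * t ^ 2 := mul_nonneg hlam.le (sq_nonneg t)
    calc τ * (lam ^ 2 * t ^ 2) = (τ * lam) * (lam * t ^ 2) := by ring
      _ ≤ 1 * (lam * t ^ 2) := mul_le_mul_of_nonneg_right hτ2 h3
      _ = lam * t ^ 2 := one_mul _
  have h4 : 0 ≤ lam / 2 * ‖C vj - d + wp‖ ^ 2 :=
    mul_nonneg (by linarith) (sq_nonneg _)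
  nlinarith [h1, h2, h4]
end
end
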